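/- arXiv:2306.14862 — 6 statements merged into one kernel-verified Lean document; each statement's English description precedes it below -/
import Mathlib

section
/- Suppose σ_U² = σ_{U*}² + θ₁² σ_ε², σ_V² = σ_{V*}² + σ_ε², and σ_UV = σ_{U*V*} − θ₁ σ_ε², with σ_{U*}² ≥ 0, σ_{V*}² ≥ 0, σ_ε² ≥ 0, and the Cauchy–Schwarz constraint σ_{U*V*}² ≤ σ_{U*}² σ_{V*}². If σ_V² θ₁² + 2 σ_UV θ₁ + σ_U² > 0, then σ_ε² ≤ (σ_U² σ_V² − σ_UV²)/(σ_V² θ₁² + 2 σ_UV θ₁ + σ_U²). -/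
/-- Under the reduced-form/structural relations and the Cauchy–Schwarz constraint,
the measurement error variance is bounded by `(σ_U²σ_V² − σ_UV²)/D`. -/
theorem sigma_eps_upper_bound (θ1 sU2 sV2 sUV sUs2 sVs2 sUVs se2 : ℝ)
    (hU : sU2 = sUs2 + θ1 ^ 2 * se2)
    (hV : sV2 = sVs2 + se2)
    (hUV : sUV = sUVs - θ1 * se2)
    (hUs : 0 ≤ sUs2) (hVs : 0 ≤ sVs2) (he : 0 ≤ se2)
    (hCS : sUVs ^ 2 ≤ sUs2 * sVs2)
    (hD : 0 < sV2 * θ1 ^ 2 + 2 * sUV * θ1 + sU2) :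
    se2 ≤ (sU2 * sV2 - sUV ^ 2) / (sV2 * θ1 ^ 2 + 2 * sUV * θ1 + sU2) := by
  subst hU hV hUV; rw [le_div_iff₀ hD]
  nlinarith [sq_nonneg θ1, sq_nonneg se2]
end

section
/- Under the constraints σ_U² = σ_{U*}² + θ₁² σ_ε², σ_V² = σ_{V*}² + σ_ε², σ_UV = σ_{U*V*} − θ₁ σ_ε², σ_{U*}², σ_{V*}², σ_ε² ≥ 0, σ_{U*V*}² ≤ σ_{U*}² σ_{V*}², and σ_UV² < σ_U² σ_V², the parameter σ_{U*}² satisfies σ̲_{U*}² ≤ σ_{U*}² ≤ σ_U², where σ̲_{U*}² := max{ (θ₁ σ_UV + σ_U²)² / (σ_V² θ₁² + 2 σ_UV θ₁ + σ_U²), σ_U² − θ₁² σ_V² }. -/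
/-- The lower bound `σ̲_{U*}²` from Proposition 1. -/
noncomputable def lowerBound (θ1 sU2 sV2 sUV : ℝ) : ℝ :=
  max ((θ1 * sUV + sU2) ^ 2 / (sV2 * θ1 ^ 2 + 2 * sUV * θ1 + sU2))
    (sU2 - θ1 ^ 2 * sV2)

/-- Necessity part of Proposition 1: under the structural/reduced-form relations,
the nonnegativity and Cauchy–Schwarz constraints, and `σ_UV² < σ_U²σ_V²`,
the true heterogeneity variance satisfies `σ̲_{U*}² ≤ σ_{U*}² ≤ σ_U²`. -/
theorem sigma_Ustar_bounds (θ1 sU2 sV2 sUV sUs2 sVs2 sUVs se2 : ℝ)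
    (hUpos : 0 < sU2) (hVpos : 0 < sV2)
    (hU : sU2 = sUs2 + θ1 ^ 2 * se2)
    (hV : sV2 = sVs2 + se2)
    (hUV : sUV = sUVs - θ1 * se2)
    (hUs : 0 ≤ sUs2) (hVs : 0 ≤ sVs2) (he : 0 ≤ se2)
    (hCS : sUVs ^ 2 ≤ sUs2 * sVs2)
    (hρ : sUV ^ 2 < sU2 * sV2) :
    lowerBound θ1 sU2 sV2 sUV ≤ sUs2 ∧ sUs2 ≤ sU2 := by
  subst hU hV hUV
  unfold lowerBound
  constructor
  · apply max_le
    · have hDeq : (sVs2 + se2) * θ1 ^ 2 + 2 * (sUVs - θ1 * se2) * θ1 + (sUs2 + θ1 ^ 2 * se2)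
          = θ1 ^ 2 * sVs2 + 2 * θ1 * sUVs + sUs2 := by ring
      have hNeq : θ1 * (sUVs - θ1 * se2) + (sUs2 + θ1 ^ 2 * se2) = θ1 * sUVs + sUs2 := by ring
      rw [hDeq, hNeq]
      have hD0 : 0 ≤ θ1 ^ 2 * sVs2 + 2 * θ1 * sUVs + sUs2 := by
        rcases hVs.eq_or_lt with h0 | hpos
        · have : sUVs = 0 := by nlinarith [sq_nonneg sUVs]
          nlinarith
        · nlinarith [sq_nonneg (θ1 * sVs2 + sUVs)]
      rcases hD0.eq_or_lt with h0 | hpos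
      · rw [← h0, div_zero]; exact hUs
      · rw [div_le_iff₀ hpos]
        nlinarith [mul_le_mul_of_nonneg_left hCS (sq_nonneg θ1)]
    · nlinarith [mul_le_mul_of_nonneg_left hVs (sq_nonneg θ1)]
  · nlinarith [mul_nonneg (sq_nonneg θ1) he]
end

section
/- Fix reals θ₁ ≠ 0, σ_U², σ_V² > 0, σ_UV with σ_UV² < σ_U² σ_V², and let σ̲_{U*}² := max{ (θ₁ σ_UV + σ_U²)²/(σ_V² θ₁² + 2 σ_UV θ₁ + σ_U²), σ_U² − θ₁² σ_V² }. Then for every s ∈ [σ̲_{U*}², σ_U²], the values σ_ε² := (σ_U² − s)/θ₁², σ_{V*}² := σ_V² − σ_ε², σ_{U*V*} := σ_UV + θ₁ σ_ε² satisfy σ_ε² ≥ 0, σ_{V*}² ≥ 0, and σ_{U*V*}² ≤ s · σ_{V*}². -/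
lemma quadratic_pos_of_sq_lt_mul {a b c : ℝ} (hc : 0 < c) (h : b ^ 2 < a * c) (x : ℝ) :
    0 < c * x ^ 2 + 2 * b * x + a := by
  have hmul : 0 < c * (c * x ^ 2 + 2 * b * x + a) := by
    have : c * (c * x ^ 2 + 2 * b * x + a) = (c * x + b) ^ 2 + (a * c - b ^ 2) := by ring
    rw [this]
    positivity [sub_pos.2 h]
  exact pos_of_mul_pos_right hmul hc.le

lemma sq_mul_covariance_slack {θ u v c s : ℝ} (hθ : θ ≠ 0) :
    θ ^ 2 * (s * (v - (u - s) / θ ^ 2) - (c + θ * ((u - s) / θ ^ 2)) ^ 2) =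
      s * (v * θ ^ 2 + 2 * c * θ + u) - (θ * c + u) ^ 2 := by
  field_simp
  ring

theorem sigma_Ustar_bounds_sharp_general (θ1 sU2 sV2 sUV : ℝ)
    (hθ : θ1 ≠ 0) (hVpos : 0 < sV2)
    (hρ : sUV ^ 2 < sU2 * sV2) :
    ∀ s ∈ Set.Icc (lowerBound θ1 sU2 sV2 sUV) sU2,
      0 ≤ (sU2 - s) / θ1 ^ 2 ∧
      0 ≤ sV2 - (sU2 - s) / θ1 ^ 2 ∧
      (sUV + θ1 * ((sU2 - s) / θ1 ^ 2)) ^ 2 ≤ s * (sV2 - (sU2 - s) / θ1 ^ 2) := by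
  rintro s ⟨hlow, hs⟩
  obtain ⟨hratio, hdiff⟩ := max_le_iff.1 hlow
  have hθ2 : 0 < θ1 ^ 2 := by positivity
  have hD : 0 < sV2 * θ1 ^ 2 + 2 * sUV * θ1 + sU2 := quadratic_pos_of_sq_lt_mul hVpos hρ θ1
  have hsq := (div_le_iff₀ hD).1 hratio
  refine ⟨div_nonneg (sub_nonneg.2 hs) hθ2.le,
    sub_nonneg.2 ((div_le_iff₀ hθ2).2 (by linarith)), ?_⟩
  rw [← sub_nonneg, ← mul_nonneg_iff_of_pos_left hθ2, sq_mul_covariance_slack hθ]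
  linarith

/-- Sharpness part of Proposition 1: every `s ∈ [σ̲_{U*}², σ_U²]` is attained by an
admissible structural parameter configuration. -/
theorem sigma_Ustar_bounds_sharp (θ1 sU2 sV2 sUV : ℝ)
    (hθ : θ1 ≠ 0) (hUpos : 0 < sU2) (hVpos : 0 < sV2)
    (hρ : sUV ^ 2 < sU2 * sV2) :
    ∀ s ∈ Set.Icc (lowerBound θ1 sU2 sV2 sUV) sU2,
      0 ≤ (sU2 - s) / θ1 ^ 2 ∧
      0 ≤ sV2 - (sU2 - s) / θ1 ^ 2 ∧
      (sUV + θ1 * ((sU2 - s) / θ1 ^ 2)) ^ 2 ≤ s * (sV2 - (sU2 - s) / θ1 ^ 2) :=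
  sigma_Ustar_bounds_sharp_general θ1 sU2 sV2 sUV hθ hVpos hρ
end

section
/- Define the lower bound function σ̲_{U*}²(θ₁, σ_U², σ_V², σ_UV) := max{ (θ₁ σ_UV + σ_U²)²/(σ_V² θ₁² + 2 σ_UV θ₁ + σ_U²), σ_U² − θ₁² σ_V² }. If σ_U², σ_V² > 0 and σ_UV² < σ_U² σ_V², then 0 ≤ σ̲_{U*}² ≤ σ_U². -/
/-- The identified set `[σ̲_{U*}², σ_U²]` is a nonempty subinterval of `[0, σ_U²]`:
`0 ≤ σ̲_{U*}² ≤ σ_U²`. -/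
theorem lowerBound_mem_Icc (θ1 sU2 sV2 sUV : ℝ)
    (hUpos : 0 < sU2) (hVpos : 0 < sV2)
    (hρ : sUV ^ 2 < sU2 * sV2) :
    0 ≤ lowerBound θ1 sU2 sV2 sUV ∧ lowerBound θ1 sU2 sV2 sUV ≤ sU2 := by
  have hD : 0 < sV2 * θ1 ^ 2 + 2 * sUV * θ1 + sU2 := by
    nlinarith [sq_nonneg (sV2 * θ1 + sUV), sq_nonneg θ1]
  constructor
  · exact le_max_of_le_left (div_nonneg (sq_nonneg _) hD.le)
  · apply max_le
    · rw [div_le_iff₀ hD]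
      nlinarith [sq_nonneg θ1, mul_nonneg (sq_nonneg θ1) (sub_pos.mpr hρ).le]
    · nlinarith [sq_nonneg θ1]
end

section
/- Under the constraints for each pair (j,ℓ): σ_{U,jℓ}² = σ_{U*}² + θ₁² σ_{ε,ℓ}², σ_{V,jℓ}² = σ_{V*,j}² + σ_{ε,ℓ}², σ_{UV,jℓ} = σ_{U*V*,j} − θ₁ σ_{ε,ℓ}², with all variances nonnegative and σ_{U*V*,j}² ≤ σ_{U*}² σ_{V*,j}², the common parameter σ_{U*}² lies in the intersection ⋂_{j,ℓ} [σ̲_{U*,jℓ}², σ_{U,jℓ}²], where σ̲_{U*,jℓ}² is the lower bound from the single-component case computed from (θ₁, σ_{U,jℓ}², σ_{V,jℓ}², σ_{UV,jℓ}). In particular σ_{U*}² ∈ [max_{j,ℓ} σ̲_{U*,jℓ}², min_{j,ℓ} σ_{U,jℓ}²]. -/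
/-- Necessity part of the bound in the Gaussian-mixture IV-Tobit model: the common
heterogeneity variance `σ_{U*}²` lies in the intersection over all mixture
components `(j, ℓ)` of the single-component identified sets
`[σ̲_{U*,jℓ}², σ_{U,jℓ}²]`. -/
theorem sigma_Ustar_bounds_mixture
    {J L : ℕ} (θ1 sUs2 : ℝ)
    (sVs2 : Fin J → ℝ) (sUVs : Fin J → ℝ) (se2 : Fin L → ℝ)
    (sU2 : Fin J → Fin L → ℝ) (sV2 : Fin J → Fin L → ℝ) (sUV : Fin J → Fin L → ℝ)
    (hU : ∀ j ℓ, sU2 j ℓ = sUs2 + θ1 ^ 2 * se2 ℓ)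
    (hV : ∀ j ℓ, sV2 j ℓ = sVs2 j + se2 ℓ)
    (hUV : ∀ j ℓ, sUV j ℓ = sUVs j - θ1 * se2 ℓ)
    (hUs : 0 ≤ sUs2) (hVs : ∀ j, 0 ≤ sVs2 j) (he : ∀ ℓ, 0 ≤ se2 ℓ)
    (hCS : ∀ j, (sUVs j) ^ 2 ≤ sUs2 * sVs2 j)
    (hD : ∀ j ℓ, 0 < sV2 j ℓ * θ1 ^ 2 + 2 * sUV j ℓ * θ1 + sU2 j ℓ) :
    sUs2 ∈ ⋂ (j : Fin J), ⋂ (ℓ : Fin L),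
      Set.Icc (lowerBound θ1 (sU2 j ℓ) (sV2 j ℓ) (sUV j ℓ)) (sU2 j ℓ) := by
  simp only [Set.mem_iInter, Set.mem_Icc]
  intro j ℓ
  have hD' := hD j ℓ
  constructor
  · apply max_le
    · rw [div_le_iff₀ hD', hU j ℓ, hV j ℓ, hUV j ℓ] at *
      have h := mul_le_mul_of_nonneg_left (hCS j) (sq_nonneg θ1)
      nlinarith [h]
    · rw [hU j ℓ, hV j ℓ]
      nlinarith [mul_nonneg (sq_nonneg θ1) (hVs j)]
  · rw [hU j ℓ]
    nlinarith [mul_nonneg (sq_nonneg θ1) (he ℓ)]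
end

section
/- Suppose σ_U², σ_V² > 0, σ_UV² < σ_U²σ_V², and θ₁ ≠ 0. Then σ̲_{U*}² < σ_U², i.e., the identified interval [σ̲_{U*}², σ_U²] for σ_{U*}² has nonempty interior (it does not degenerate to the singleton {σ_U²}) whenever θ₁ ≠ 0 and |ρ_UV| < 1. -/
/-- Whenever `θ₁ ≠ 0` and `|ρ_UV| < 1`, the identified interval
`[σ̲_{U*}², σ_U²]` has nonempty interior: `σ̲_{U*}² < σ_U²`. -/
theorem identified_set_nondegenerate (θ1 sU2 sV2 sUV : ℝ)
    (hUpos : 0 < sU2) (hVpos : 0 < sV2)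
    (hρ : sUV ^ 2 < sU2 * sV2) (hθ : θ1 ≠ 0) :
    lowerBound θ1 sU2 sV2 sUV < sU2 := by
  have hθ2 : 0 < θ1 ^ 2 := by positivity
  have hD : 0 < sV2 * θ1 ^ 2 + 2 * sUV * θ1 + sU2 := by
    nlinarith [sq_nonneg (sV2 * θ1 + sUV), mul_pos hVpos hUpos]
  apply max_lt
  · rw [div_lt_iff₀ hD]
    nlinarith [mul_pos hθ2 (sub_pos.mpr hρ)]
  · nlinarith [mul_pos hθ2 hVpos]
end
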